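/- Let Δ ≥ 0 and let M = (Ω, E, {ψ_i}_{i∈[n]}, {ψ_e}_{e∈E}) be an MRF on Ω = Ω_1 × ⋯ × Ω_n with Δ(M) ≤ Δ, inducing the distribution π = D_M. Fix two points v^1, v^{-1} ∈ Ω, and for σ ∈ {-1,1}^n write v^σ := (v_1^{σ_1}, …, v_n^{σ_n}). Define the probability distribution ρ on {-1,1}^n by ρ(σ) ∝ π(v^σ)·π(v^{-σ}). Then: (a) ρ is symmetric, i.e. ρ(σ) = ρ(-σ) for all σ ∈ {-1,1}^n; and (b) ρ is a 2Δ-MRF distribution — specifically, the MRF on {-1,1}^n with the same hyperedge set E, all vertex potentials identically zero, and edge potentials ψ̂_e(σ_e) := ψ_e((v_i^{σ_i})_{i∈e}) + ψ_e((v_i^{-σ_i})_{i∈e}) has maximum weighted degree at most 2Δ and induces the distribution ρ. -/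

import Mathlib

/-- A Markov Random Field on `Ω = Ω 0 × ⋯ × Ω (n-1)`: a set of hyperedges,
vertex potentials, and edge potentials, where each edge potential depends only
on the coordinates in that edge. -/
structure MRF (n : ℕ) (Ω : Fin n → Type) [∀ i, Fintype (Ω i)] where
  edges : Finset (Finset (Fin n))
  vertexPot : ∀ i : Fin n, Ω i → ℝ
  edgePot : Finset (Fin n) → (∀ i, Ω i) → ℝ
  edgePot_local : ∀ e ∈ edges, ∀ u v : ∀ i, Ω i,
    (∀ i ∈ e, u i = v i) → edgePot e u = edgePot e v

namespace MRF

variable {n : ℕ} {Ω : Fin n → Type} [∀ i, Fintype (Ω i)]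

/-- The unnormalized Gibbs weight of a configuration. -/
noncomputable def weight (M : MRF n Ω) (u : ∀ i, Ω i) : ℝ :=
  Real.exp (∑ i, M.vertexPot i (u i) + ∑ e ∈ M.edges, M.edgePot e u)

/-- The probability distribution induced by the MRF: `Pr[V = u] ∝ weight u`. -/
noncomputable def dist (M : MRF n Ω) (u : ∀ i, Ω i) : ℝ :=
  M.weight u / ∑ v, M.weight v

/-- The maximum weighted degree of the MRF is at most `Δ`. -/
def DegreeLE (M : MRF n Ω) (Δ : ℝ) : Prop :=
  ∀ (i : Fin n) (u : ∀ i, Ω i),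
    |∑ e ∈ M.edges.filter (fun e => i ∈ e), M.edgePot e u| ≤ Δ

end MRF

/-- Reading `σ` as a sign vector (`true ↦ +1`), `select σ u w` is the point `v^σ` for `v¹ = u`,
`v⁻¹ = w`, and `select σ w u` is `v^{-σ}`. -/
def select {ι : Type*} {Ω : ι → Type*} (σ : ι → Bool) (u w : ∀ i, Ω i) : ∀ i, Ω i :=
  fun i => if σ i then u i else w i

theorem select_not {ι : Type*} {Ω : ι → Type*} (σ : ι → Bool) (u w : ∀ i, Ω i) :
    select (fun i => !σ i) u w = select σ w u := by
  funext i
  cases h : σ i <;> simp [select, h]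

theorem select_eq_select_of_eqOn {ι : Type*} {Ω : ι → Type*} {σ τ : ι → Bool} {s : Set ι}
    (h : ∀ i ∈ s, σ i = τ i) (u w : ∀ i, Ω i) : ∀ i ∈ s, select σ u w i = select τ u w i :=
  fun i hi => by simp only [select, h i hi]

namespace MRF

variable {n : ℕ} {Ω : Fin n → Type} [∀ i, Fintype (Ω i)]

theorem weight_pos (M : MRF n Ω) (u : ∀ i, Ω i) : 0 < M.weight u :=
  Real.exp_pos _

theorem sum_weight_pos (M : MRF n Ω) (u : ∀ i, Ω i) : 0 < ∑ v, M.weight v :=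
  Finset.sum_pos (fun v _ => M.weight_pos v) ⟨u, Finset.mem_univ u⟩

def symmetrize (M : MRF n Ω) (u w : ∀ i, Ω i) : MRF n (fun _ => Bool) where
  edges := M.edges
  vertexPot _ _ := 0
  edgePot e σ := M.edgePot e (select σ u w) + M.edgePot e (select σ w u)
  edgePot_local e he σ τ h := by
    rw [M.edgePot_local e he _ _ (select_eq_select_of_eqOn h u w),
      M.edgePot_local e he _ _ (select_eq_select_of_eqOn h w u)]

noncomputable def symmetrizedDist (M : MRF n Ω) (u w : ∀ i, Ω i) (σ : Fin n → Bool) : ℝ :=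
  M.dist (select σ u w) * M.dist (select σ w u) /
    ∑ τ : Fin n → Bool, M.dist (select τ u w) * M.dist (select τ w u)

theorem symmetrizedDist_not (M : MRF n Ω) (u w : ∀ i, Ω i) (σ : Fin n → Bool) :
    M.symmetrizedDist u w σ = M.symmetrizedDist u w (fun i => !σ i) := by
  rw [symmetrizedDist, symmetrizedDist, select_not, select_not, mul_comm]

theorem DegreeLE.symmetrize {M : MRF n Ω} {Δ : ℝ} (hdeg : M.DegreeLE Δ) (u w : ∀ i, Ω i) :
    (M.symmetrize u w).DegreeLE (2 * Δ) := by
  intro i σ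
  calc |∑ e ∈ M.edges.filter (i ∈ ·), (M.edgePot e (select σ u w) + M.edgePot e (select σ w u))|
      = |∑ e ∈ M.edges.filter (i ∈ ·), M.edgePot e (select σ u w)
          + ∑ e ∈ M.edges.filter (i ∈ ·), M.edgePot e (select σ w u)| := by
        rw [Finset.sum_add_distrib]
    _ ≤ Δ + Δ := (abs_add_le _ _).trans (add_le_add (hdeg i _) (hdeg i _))
    _ = 2 * Δ := by ring

/-- In `π(v^σ) π(v^{-σ})` each coordinate contributes the vertex potentials of both `u i` and
`w i`, whatever `σ i` is; so up to a constant factor only the edge potentials survive. -/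
theorem weight_select_mul_weight_select (M : MRF n Ω) (u w : ∀ i, Ω i) (σ : Fin n → Bool) :
    M.weight (select σ u w) * M.weight (select σ w u)
      = Real.exp (∑ i, (M.vertexPot i (u i) + M.vertexPot i (w i)))
        * (M.symmetrize u w).weight σ := by
  have hvertex : ∀ i, M.vertexPot i (select σ u w i) + M.vertexPot i (select σ w u i)
      = M.vertexPot i (u i) + M.vertexPot i (w i) := fun i => by
    cases h : σ i <;> simp [select, h, add_comm]
  simp only [weight, symmetrize, Finset.sum_const_zero, zero_add, ← Real.exp_add,
    Finset.sum_add_distrib, ← hvertex]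
  congr 1
  ring

theorem dist_symmetrize (M : MRF n Ω) (u w : ∀ i, Ω i) :
    (M.symmetrize u w).dist = M.symmetrizedDist u w := by
  funext σ
  have hZ : ∑ v, M.weight v ≠ 0 := (M.sum_weight_pos u).ne'
  set c := Real.exp (∑ i, (M.vertexPot i (u i) + M.vertexPot i (w i))) /
    ((∑ v, M.weight v) * ∑ v, M.weight v)
  have hc : c ≠ 0 := div_ne_zero (Real.exp_ne_zero _) (mul_ne_zero hZ hZ)
  have hprod : ∀ τ, M.dist (select τ u w) * M.dist (select τ w u)
      = c * (M.symmetrize u w).weight τ := fun τ => by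
    rw [dist, dist, div_mul_div_comm, weight_select_mul_weight_select, div_mul_eq_mul_div]
  simp only [symmetrizedDist, hprod]
  rw [← Finset.mul_sum, mul_div_mul_left _ _ hc, dist]

end MRF

theorem googol_symmetrization_is_2Delta_mrf_general
    {n : ℕ} {Ω : Fin n → Type} [∀ i, Fintype (Ω i)]
    (Δ : ℝ) (M : MRF n Ω) (hdeg : M.DegreeLE Δ)
    (v1 vm1 : ∀ i, Ω i)
    (ρ : (Fin n → Bool) → ℝ)
    (hρ : ∀ σ : Fin n → Bool,
      ρ σ = (M.dist (fun i => if σ i then v1 i else vm1 i) *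
             M.dist (fun i => if σ i then vm1 i else v1 i)) /
            (∑ τ : Fin n → Bool,
              M.dist (fun i => if τ i then v1 i else vm1 i) *
              M.dist (fun i => if τ i then vm1 i else v1 i))) :
    (∀ σ : Fin n → Bool, ρ σ = ρ (fun i => !(σ i))) ∧
    ∃ Mhat : MRF n (fun _ => Bool),
      Mhat.edges = M.edges ∧
      (∀ (i : Fin n) (b : Bool), Mhat.vertexPot i b = 0) ∧
      (∀ e ∈ M.edges, ∀ σ : Fin n → Bool,
        Mhat.edgePot e σ
          = M.edgePot e (fun i => if σ i then v1 i else vm1 i)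
            + M.edgePot e (fun i => if σ i then vm1 i else v1 i)) ∧
      Mhat.DegreeLE (2 * Δ) ∧
      Mhat.dist = ρ := by
  obtain rfl : ρ = M.symmetrizedDist v1 vm1 := funext hρ
  exact ⟨M.symmetrizedDist_not v1 vm1, M.symmetrize v1 vm1, rfl, fun _ _ => rfl,
    fun _ _ _ => rfl, hdeg.symmetrize v1 vm1, M.dist_symmetrize v1 vm1⟩

/-- Given a `Δ`-MRF `M` with induced distribution `π = M.dist`
and two fixed points `v¹, v⁻¹ ∈ Ω`, the distribution `ρ` on sign vectors
(encoded as `Fin n → Bool`, `true ↦ +1`) defined by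
`ρ(σ) ∝ π(v^σ)·π(v^{-σ})` is (a) symmetric, and (b) induced by an MRF on
`{-1,1}^n` with the same hyperedges, zero vertex potentials, edge potentials
`ψ̂_e(σ) = ψ_e(v^σ) + ψ_e(v^{-σ})`, and maximum weighted degree at most `2Δ`. -/
theorem googol_symmetrization_is_2Delta_mrf
    {n : ℕ} {Ω : Fin n → Type} [∀ i, Fintype (Ω i)] [∀ i, Nonempty (Ω i)]
    (Δ : ℝ) (hΔ : 0 ≤ Δ) (M : MRF n Ω) (hdeg : M.DegreeLE Δ)
    (v1 vm1 : ∀ i, Ω i)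
    (ρ : (Fin n → Bool) → ℝ)
    (hρ : ∀ σ : Fin n → Bool,
      ρ σ = (M.dist (fun i => if σ i then v1 i else vm1 i) *
             M.dist (fun i => if σ i then vm1 i else v1 i)) /
            (∑ τ : Fin n → Bool,
              M.dist (fun i => if τ i then v1 i else vm1 i) *
              M.dist (fun i => if τ i then vm1 i else v1 i))) :
    (∀ σ : Fin n → Bool, ρ σ = ρ (fun i => !(σ i))) ∧
    ∃ Mhat : MRF n (fun _ => Bool),
      Mhat.edges = M.edges ∧
      (∀ (i : Fin n) (b : Bool), Mhat.vertexPot i b = 0) ∧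
      (∀ e ∈ M.edges, ∀ σ : Fin n → Bool,
        Mhat.edgePot e σ
          = M.edgePot e (fun i => if σ i then v1 i else vm1 i)
            + M.edgePot e (fun i => if σ i then vm1 i else v1 i)) ∧
      Mhat.DegreeLE (2 * Δ) ∧
      Mhat.dist = ρ :=
  googol_symmetrization_is_2Delta_mrf_general Δ M hdeg v1 vm1 ρ hρ
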